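/- arXiv:2604.01873 — 3 statements merged into one kernel-verified Lean document; each statement's English description precedes it below -/
import Mathlib

section
/- Let E be a real inner product space, let u, y ∈ E with u ≠ 0, and let Π be a real symmetric 2×2 matrix with entries π₁₁, π₁₂, π₂₂. Then the SRG points z_±(u, y) satisfy Re z_±(u, y) = ⟪u, y⟫/‖u‖² and |z_±(u, y)| = ‖y‖/‖u‖, and consequently z_±(u, y) ∈ S(Π) if and only if π₁₁·‖u‖² + 2·π₁₂·⟪u, y⟫ + π₂₂·‖y‖² ≥ 0. -/
open scoped RealInnerProductSpace Classical

/-- The region `S(Π)` in the complex plane associated with a real symmetric 2×2 matrix `Π`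
with entries `π₁₁, π₁₂, π₂₂`:  `S(Π) = {z ∈ ℂ : π₁₁ + 2·π₁₂·Re z + π₂₂·|z|² ≥ 0}`. -/
def SRegion (p11 p12 p22 : ℝ) : Set ℂ :=
  {z : ℂ | 0 ≤ p11 + 2 * p12 * z.re + p22 * ‖z‖ ^ 2}

/-- SRG point `z₊(u, y) = (‖y‖/‖u‖)·exp(+i·arccos(⟪u,y⟫/(‖u‖‖y‖)))` (and `0` for `y = 0`). -/

noncomputable def srgPlus {E : Type*} [NormedAddCommGroup E] [InnerProductSpace ℝ E]
    (u y : E) : ℂ :=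
  if y = 0 then 0 else
    ((‖y‖ / ‖u‖ : ℝ) : ℂ) *
      Complex.exp (Complex.I * (Real.arccos (⟪u, y⟫ / (‖u‖ * ‖y‖)) : ℝ))

/-- SRG point `z₋(u, y) = (‖y‖/‖u‖)·exp(−i·arccos(⟪u,y⟫/(‖u‖‖y‖)))` (and `0` for `y = 0`). -/

noncomputable def srgMinus {E : Type*} [NormedAddCommGroup E] [InnerProductSpace ℝ E]
    (u y : E) : ℂ :=
  if y = 0 then 0 else
    ((‖y‖ / ‖u‖ : ℝ) : ℂ) *
      Complex.exp (-Complex.I * (Real.arccos (⟪u, y⟫ / (‖u‖ * ‖y‖)) : ℝ))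

/-! The point `z₋` is the complex conjugate of `z₊`, and `S(Π)` is invariant under conjugation,
so only `z₊` needs treatment. Its polar form has modulus `‖y‖/‖u‖` and argument the angle between
`u` and `y`, whose cosine is `⟪u, y⟫/(‖u‖‖y‖)`; multiplying the defining inequality of `S(Π)` by
`‖u‖² > 0` gives the criterion. -/

open Complex InnerProductGeometry ComplexConjugate

theorem conj_mem_SRegion_iff {p11 p12 p22 : ℝ} {z : ℂ} :
    conj z ∈ SRegion p11 p12 p22 ↔ z ∈ SRegion p11 p12 p22 := by
  simp only [SRegion, Set.mem_ofPred_eq, conj_re, norm_conj]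

section SRGPoints

variable {E : Type*} [NormedAddCommGroup E] [InnerProductSpace ℝ E] {u y : E}

theorem srgPlus_of_ne_zero (hy : y ≠ 0) :
    srgPlus u y = ((‖y‖ / ‖u‖ : ℝ) : ℂ) * exp (angle u y * I) := by
  rw [srgPlus, if_neg hy, mul_comm I, angle]

theorem srgMinus_eq_conj_srgPlus (u y : E) : srgMinus u y = conj (srgPlus u y) := by
  unfold srgMinus srgPlus
  split_ifs
  · simp
  · rw [map_mul, ← exp_conj, map_mul, conj_I, conj_ofReal, conj_ofReal, neg_mul]

theorem srgPlus_re (u y : E) : (srgPlus u y).re = ⟪u, y⟫ / ‖u‖ ^ 2 := by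
  by_cases hy : y = 0
  · simp [srgPlus, hy]
  · rw [srgPlus_of_ne_zero hy, re_ofReal_mul, exp_ofReal_mul_I_re, cos_angle]
    have : ‖y‖ ≠ 0 := norm_ne_zero_iff.mpr hy
    field_simp

theorem norm_srgPlus (u y : E) : ‖srgPlus u y‖ = ‖y‖ / ‖u‖ := by
  by_cases hy : y = 0
  · simp [srgPlus, hy]
  · rw [srgPlus_of_ne_zero hy, norm_mul, norm_exp_ofReal_mul_I, mul_one, norm_real,
      Real.norm_of_nonneg (by positivity)]

theorem srgPlus_mem_SRegion_iff (hu : u ≠ 0) (p11 p12 p22 : ℝ) :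
    srgPlus u y ∈ SRegion p11 p12 p22 ↔
      0 ≤ p11 * ‖u‖ ^ 2 + 2 * p12 * ⟪u, y⟫ + p22 * ‖y‖ ^ 2 := by
  have hu2 : 0 < ‖u‖ ^ 2 := by positivity
  have hquad : p11 + 2 * p12 * (⟪u, y⟫ / ‖u‖ ^ 2) + p22 * (‖y‖ / ‖u‖) ^ 2 =
      (p11 * ‖u‖ ^ 2 + 2 * p12 * ⟪u, y⟫ + p22 * ‖y‖ ^ 2) / ‖u‖ ^ 2 := by
    field_simp
  rw [SRegion, Set.mem_ofPred_eq, srgPlus_re, norm_srgPlus, hquad, le_div_iff₀ hu2, zero_mul]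

end SRGPoints

/-- For `u ≠ 0` in a real inner product space, the SRG points `z_±(u,y)` satisfy
`Re z_± = ⟪u,y⟫/‖u‖²`, `|z_±| = ‖y‖/‖u‖`, and hence `z_±(u,y) ∈ S(Π)` iff
`π₁₁‖u‖² + 2π₁₂⟪u,y⟫ + π₂₂‖y‖² ≥ 0`. -/
theorem srg_point_re_abs_mem {E : Type*} [NormedAddCommGroup E] [InnerProductSpace ℝ E]
    (u y : E) (hu : u ≠ 0) (p11 p12 p22 : ℝ) :
    ((srgPlus u y).re = ⟪u, y⟫ / ‖u‖ ^ 2 ∧ (srgMinus u y).re = ⟪u, y⟫ / ‖u‖ ^ 2) ∧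
    (‖srgPlus u y‖ = ‖y‖ / ‖u‖ ∧ ‖srgMinus u y‖ = ‖y‖ / ‖u‖) ∧
    ((srgPlus u y ∈ SRegion p11 p12 p22 ∧ srgMinus u y ∈ SRegion p11 p12 p22) ↔
      0 ≤ p11 * ‖u‖ ^ 2 + 2 * p12 * ⟪u, y⟫ + p22 * ‖y‖ ^ 2) := by
  simp only [srgMinus_eq_conj_srgPlus, conj_re, norm_conj, conj_mem_SRegion_iff, and_self]
  exact ⟨srgPlus_re u y, norm_srgPlus u y, srgPlus_mem_SRegion_iff hu p11 p12 p22⟩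
end

section
/- Let A ∈ ℝ^{k×k}, B ∈ ℝ^{k×2n}, C ∈ ℝ^{m×k}, D ∈ ℝ^{m×2n}, let M be a real symmetric m×m matrix, let Π be a real symmetric 2×2 matrix, let P be a real symmetric positive semidefinite k×k matrix, and let τ > 0. Suppose the LMI holds: the real symmetric (k+2n)×(k+2n) block matrix [[AᵀP + PA, PB], [BᵀP, −(Π ⊗ Iₙ)]] + τ·[C D]ᵀ M [C D] is negative semidefinite. Let v : [0,∞) → ℝ^{2n} be continuous, let x : [0,∞) → ℝ^k be continuously differentiable with x'(t) = A x(t) + B v(t) for all t ≥ 0 and x(0) = 0, and set g(t) := C x(t) + D v(t). Then for every T ≥ 0: τ·∫₀ᵀ g(t)ᵀ M g(t) dt + x(T)ᵀ P x(T) ≤ ∫₀ᵀ v(t)ᵀ (Π ⊗ Iₙ) v(t) dt. -/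
open Matrix

/-!
Evaluating the quadratic form of the LMI at `(x(t), v(t))` gives, pointwise in time,
`d/dt (xᵀPx) + τ gᵀMg ≤ vᵀ(Π ⊗ Iₙ)v`; integrating over `[0, T]` and using `x(0) = 0` yields the
dissipation inequality.
-/

/-- `Π ⊗ Iₙ` : the real `2n×2n` block matrix
`[[π₁₁·Iₙ, π₁₂·Iₙ], [π₁₂·Iₙ, π₂₂·Iₙ]]` associated with the real symmetric 2×2 matrix
with entries `π₁₁, π₁₂, π₂₂`. -/
def piKronR (n : ℕ) (p11 p12 p22 : ℝ) :
    Matrix (Fin n ⊕ Fin n) (Fin n ⊕ Fin n) ℝ :=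
  Matrix.fromBlocks (p11 • 1) (p12 • 1) (p12 • 1) (p22 • 1)

section

variable {ι κ μ : Type*} [Fintype ι] [Fintype κ] [Fintype μ]

theorem HasDerivAt.dotProduct {f g : ℝ → ι → ℝ} {f' g' : ι → ℝ} {t : ℝ}
    (hf : HasDerivAt f f' t) (hg : HasDerivAt g g' t) :
    HasDerivAt (fun s => f s ⬝ᵥ g s) (f' ⬝ᵥ g t + f t ⬝ᵥ g') t := by
  show HasDerivAt (fun s => ∑ i, f s i * g s i) (∑ i, f' i * g t i + ∑ i, f t i * g' i) t
  rw [← Finset.sum_add_distrib]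
  exact HasDerivAt.fun_sum fun i _ => (hasDerivAt_pi.1 hf i).mul (hasDerivAt_pi.1 hg i)

theorem HasDerivAt.matrix_mulVec (P : Matrix κ ι ℝ) {f : ℝ → ι → ℝ} {f' : ι → ℝ} {t : ℝ}
    (hf : HasDerivAt f f' t) : HasDerivAt (fun s => P *ᵥ f s) (P *ᵥ f') t :=
  (Matrix.mulVecLin P).toContinuousLinearMap.hasFDerivAt.comp_hasDerivAt t hf

theorem dotProduct_transpose_mul_mul_mulVec (E : Matrix μ ι ℝ) (M : Matrix μ μ ℝ) (z : ι → ℝ) :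
    z ⬝ᵥ ((Eᵀ * M * E) *ᵥ z) = (E *ᵥ z) ⬝ᵥ (M *ᵥ (E *ᵥ z)) := by
  rw [← mulVec_mulVec, ← mulVec_mulVec, dotProduct_mulVec, vecMul_transpose]

theorem sumElim_dotProduct_fromBlocks_mulVec_sumElim (A P : Matrix ι ι ℝ) (B : Matrix ι κ ℝ)
    (Q : Matrix κ κ ℝ) (x : ι → ℝ) (w : κ → ℝ) :
    Sum.elim x w ⬝ᵥ (fromBlocks (Aᵀ * P + P * A) (P * B) (Bᵀ * P) (-Q) *ᵥ Sum.elim x w) =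
      (A *ᵥ x + B *ᵥ w) ⬝ᵥ (P *ᵥ x) + x ⬝ᵥ (P *ᵥ (A *ᵥ x + B *ᵥ w)) - w ⬝ᵥ (Q *ᵥ w) := by
  simp only [fromBlocks_mulVec, sumElim_dotProduct_sumElim, add_mulVec, ← mulVec_mulVec,
    neg_mulVec, mulVec_add, dotProduct_add, add_dotProduct, dotProduct_neg, Sum.elim_comp_inl,
    Sum.elim_comp_inr]
  rw [dotProduct_mulVec x Aᵀ, dotProduct_mulVec w Bᵀ, vecMul_transpose, vecMul_transpose]
  ring

theorem dissipation_rate_le_of_lmi {A P : Matrix ι ι ℝ} {B : Matrix ι κ ℝ} {C : Matrix μ ι ℝ}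
    {D : Matrix μ κ ℝ} {M : Matrix μ μ ℝ} {Q : Matrix κ κ ℝ} {τ : ℝ}
    (hLMI : (-(fromBlocks (Aᵀ * P + P * A) (P * B) (Bᵀ * P) (-Q) +
      τ • ((fromCols C D)ᵀ * M * fromCols C D))).PosSemidef) (x : ι → ℝ) (w : κ → ℝ) :
    (A *ᵥ x + B *ᵥ w) ⬝ᵥ (P *ᵥ x) + x ⬝ᵥ (P *ᵥ (A *ᵥ x + B *ᵥ w)) +
      τ * ((C *ᵥ x + D *ᵥ w) ⬝ᵥ (M *ᵥ (C *ᵥ x + D *ᵥ w))) ≤ w ⬝ᵥ (Q *ᵥ w) := by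
  have h := hLMI.dotProduct_mulVec_nonneg (Sum.elim x w)
  rw [star_trivial, neg_mulVec, dotProduct_neg, add_mulVec, dotProduct_add, smul_mulVec,
    dotProduct_smul, smul_eq_mul, sumElim_dotProduct_fromBlocks_mulVec_sumElim,
    dotProduct_transpose_mul_mul_mulVec, fromCols_mulVec_sumElim] at h
  linarith

theorem sub_add_integral_le_integral_of_hasDerivAt {V φ q r : ℝ → ℝ} {T : ℝ} (hT : 0 ≤ T)
    (hV : ∀ t ∈ Set.Icc 0 T, HasDerivAt V (φ t) t)
    (hφ : IntervalIntegrable φ MeasureTheory.volume 0 T)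
    (hq : IntervalIntegrable q MeasureTheory.volume 0 T)
    (hr : IntervalIntegrable r MeasureTheory.volume 0 T)
    (h : ∀ t ∈ Set.Icc 0 T, φ t + q t ≤ r t) :
    V T - V 0 + ∫ t in 0..T, q t ≤ ∫ t in 0..T, r t := by
  have hFTC : ∫ t in 0..T, φ t = V T - V 0 :=
    intervalIntegral.integral_eq_sub_of_hasDerivAt (by rwa [Set.uIcc_of_le hT]) hφ
  rw [← hFTC, ← intervalIntegral.integral_add hφ hq]
  exact intervalIntegral.integral_mono_on hT (hφ.add hq) hr h

end

theorem lmi_dissipation_general (n m k : ℕ)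
    (A : Matrix (Fin k) (Fin k) ℝ) (B : Matrix (Fin k) (Fin n ⊕ Fin n) ℝ)
    (C : Matrix (Fin m) (Fin k) ℝ) (D : Matrix (Fin m) (Fin n ⊕ Fin n) ℝ)
    (M : Matrix (Fin m) (Fin m) ℝ)
    (p11 p12 p22 : ℝ)
    (P : Matrix (Fin k) (Fin k) ℝ)
    (τ : ℝ)
    (hLMI : (-(Matrix.fromBlocks (Aᵀ * P + P * A) (P * B) (Bᵀ * P)
          (-(piKronR n p11 p12 p22)) +
        τ • ((Matrix.fromCols C D)ᵀ * M * Matrix.fromCols C D))).PosSemidef)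
    (v : ℝ → (Fin n ⊕ Fin n) → ℝ) (hv : Continuous v)
    (x : ℝ → Fin k → ℝ) (hx0 : x 0 = 0)
    (hx : ∀ t : ℝ, 0 ≤ t → HasDerivAt x (A *ᵥ x t + B *ᵥ v t) t)
    (g : ℝ → Fin m → ℝ) (hg : ∀ t : ℝ, g t = C *ᵥ x t + D *ᵥ v t) :
    ∀ T : ℝ, 0 ≤ T →
      τ * (∫ t in (0:ℝ)..T, g t ⬝ᵥ (M *ᵥ g t)) + x T ⬝ᵥ (P *ᵥ x T) ≤
        ∫ t in (0:ℝ)..T, v t ⬝ᵥ ((piKronR n p11 p12 p22) *ᵥ v t) := by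
  intro T hT
  obtain rfl : g = fun t => C *ᵥ x t + D *ᵥ v t := funext hg
  have hxc : ContinuousOn x (Set.Icc 0 T) :=
    fun t ht => (hx t ht.1).continuousAt.continuousWithinAt
  have h := sub_add_integral_le_integral_of_hasDerivAt hT
    (fun t ht => (hx t ht.1).dotProduct ((hx t ht.1).matrix_mulVec P))
    (ContinuousOn.intervalIntegrable_of_Icc hT (by fun_prop))
    (ContinuousOn.intervalIntegrable_of_Icc hT (by fun_prop))
    (ContinuousOn.intervalIntegrable_of_Icc hT (by fun_prop))
    (fun t _ => dissipation_rate_le_of_lmi hLMI (x t) (v t))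
  rw [intervalIntegral.integral_const_mul, hx0] at h
  simpa [add_comm] using h

/-- Dissipation inequality from the LMI: if
`[[AᵀP + PA, PB], [BᵀP, −(Π ⊗ Iₙ)]] + τ·[C D]ᵀM[C D] ⪯ 0` with `P = Pᵀ ⪰ 0`, `τ > 0`,
then along any solution of `x' = Ax + Bv`, `x(0) = 0`, with output `g = Cx + Dv`,
`τ·∫₀ᵀ gᵀMg dt + x(T)ᵀPx(T) ≤ ∫₀ᵀ vᵀ(Π ⊗ Iₙ)v dt` for every `T ≥ 0`. -/
theorem lmi_dissipation (n m k : ℕ)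
    (A : Matrix (Fin k) (Fin k) ℝ) (B : Matrix (Fin k) (Fin n ⊕ Fin n) ℝ)
    (C : Matrix (Fin m) (Fin k) ℝ) (D : Matrix (Fin m) (Fin n ⊕ Fin n) ℝ)
    (M : Matrix (Fin m) (Fin m) ℝ) (hM : M.IsSymm)
    (p11 p12 p22 : ℝ)
    (P : Matrix (Fin k) (Fin k) ℝ) (hP : P.PosSemidef)
    (τ : ℝ) (hτ : 0 < τ)
    (hLMI : (-(Matrix.fromBlocks (Aᵀ * P + P * A) (P * B) (Bᵀ * P)
          (-(piKronR n p11 p12 p22)) +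
        τ • ((Matrix.fromCols C D)ᵀ * M * Matrix.fromCols C D))).PosSemidef)
    (v : ℝ → (Fin n ⊕ Fin n) → ℝ) (hv : Continuous v)
    (x : ℝ → Fin k → ℝ) (hx0 : x 0 = 0)
    (hx : ∀ t : ℝ, 0 ≤ t → HasDerivAt x (A *ᵥ x t + B *ᵥ v t) t)
    (g : ℝ → Fin m → ℝ) (hg : ∀ t : ℝ, g t = C *ᵥ x t + D *ᵥ v t) :
    ∀ T : ℝ, 0 ≤ T →
      τ * (∫ t in (0:ℝ)..T, g t ⬝ᵥ (M *ᵥ g t)) + x T ⬝ᵥ (P *ᵥ x T) ≤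
        ∫ t in (0:ℝ)..T, v t ⬝ᵥ ((piKronR n p11 p12 p22) *ᵥ v t) :=
  lmi_dissipation_general n m k A B C D M p11 p12 p22 P τ hLMI v hv x hx0 hx g hg
end

section
/- Let h : ℝ → ℂ be given by h(ω) := 0.13·(2 + iω)/(0.6 + iω)², the frequency response of the transfer function H(s) = 0.13·(s + 2)/(s + 0.6)². Then for every ω ∈ ℝ: 0.4 + Re(h(ω)) − 2·|h(ω)|² ≥ 0; equivalently, every point h(ω) of the Nyquist plot lies in the region S(M) for M = [[0.4, 0.5], [0.5, −2]]. -/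
/-- The frequency response of the transfer function `H(s) = 0.13·(s + 2)/(s + 0.6)²`. -/
noncomputable def freqResp (ω : ℝ) : ℂ :=
  0.13 * (2 + Complex.I * ω) / (0.6 + Complex.I * ω) ^ 2

open Complex

lemma normSq_add_mul_I_sq (p ω : ℝ) : normSq ((p + I * ω) ^ 2) = (p ^ 2 + ω ^ 2) ^ 2 := by
  rw [map_pow, normSq_apply]
  simp only [add_re, ofReal_re, mul_re, I_re, zero_mul, I_im, ofReal_im, mul_zero, sub_self,
    add_zero, add_im, mul_im, one_mul, zero_add]
  ring

lemma re_mul_div_add_I_mul_sq (k a p ω : ℝ) :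
    (k * (a + I * ω) / (p + I * ω) ^ 2).re
      = k * (a * (p ^ 2 - ω ^ 2) + 2 * p * ω ^ 2) / (p ^ 2 + ω ^ 2) ^ 2 := by
  rw [div_re, normSq_add_mul_I_sq]
  simp only [mul_re, ofReal_re, add_re, I_re, zero_mul, I_im, ofReal_im, mul_zero, sub_self,
    add_zero, add_im, mul_im, one_mul, zero_add, sub_zero, sq]
  ring

lemma norm_mul_div_add_I_mul_sq_sq (k a p ω : ℝ) :
    ‖k * (a + I * ω) / (p + I * ω) ^ 2‖ ^ 2 = k ^ 2 * (a ^ 2 + ω ^ 2) / (p ^ 2 + ω ^ 2) ^ 2 := by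
  rw [Complex.sq_norm, normSq_div, normSq_add_mul_I_sq, normSq_mul, normSq_ofReal, normSq_apply]
  simp only [add_re, ofReal_re, mul_re, I_re, zero_mul, I_im, ofReal_im, mul_zero, sub_self,
    add_zero, add_im, mul_im, one_mul, zero_add]
  ring

lemma freqResp_eq (ω : ℝ) :
    freqResp ω = ((0.13 : ℝ) : ℂ) * ((2 : ℝ) + I * ω) / ((0.6 : ℝ) + I * ω) ^ 2 := by
  push_cast
  rfl

lemma margin_freqResp_eq (ω : ℝ) :
    0.4 + (freqResp ω).re - 2 * ‖freqResp ω‖ ^ 2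
      = (0.4 * ω ^ 4 + 0.1502 * ω ^ 2 + 0.01024) / (0.36 + ω ^ 2) ^ 2 := by
  rw [freqResp_eq, re_mul_div_add_I_mul_sq, norm_mul_div_add_I_mul_sq_sq]
  field_simp
  ring

/-- Every point `h(ω)` of the Nyquist plot of `H(s) = 0.13(s+2)/(s+0.6)²` satisfies
`0.4 + Re h(ω) − 2·|h(ω)|² ≥ 0`, i.e. lies in `S(M)` for `M = [[0.4, 0.5], [0.5, −2]]`. -/
theorem nyquist_in_sregion :
    ∀ ω : ℝ,
      0 ≤ 0.4 + (freqResp ω).re - 2 * ‖freqResp ω‖ ^ 2 ∧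
      freqResp ω ∈ SRegion 0.4 0.5 (-2) := by
  intro ω
  have margin_nonneg : 0 ≤ 0.4 + (freqResp ω).re - 2 * ‖freqResp ω‖ ^ 2 := by
    rw [margin_freqResp_eq]
    positivity
  refine ⟨margin_nonneg, ?_⟩
  change 0 ≤ 0.4 + 2 * 0.5 * (freqResp ω).re + -2 * ‖freqResp ω‖ ^ 2
  linarith
end
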